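/- arXiv:1711.08050 — 2 statements merged into one kernel-verified Lean document; each statement's English description precedes it below -/
import Mathlib

section
/- Let m ≥ 2, X > 0, χ > 0, C_Φ > 0. Let a_0,…,a_{m−1} : [0,X] → ℝ be continuously differentiable, let L_1,…,L_m : [0,∞)×[0,X] → ℝ satisfy |L_i(ξ,x)| ≤ C_Φ(1+ξ^{m−1})e^{−χξ} for all i, ξ ≥ 0, x ∈ [0,X], and let Â(ε) be the operator of the previous statement (with any admissible ȳ, K_i, Π_j, f). Set β := (Σ_{j=0}^{m−1} sup_{[0,X]}|a_j'|)(χ^{m−1}+m!)/χ^{m+1}. Then for every ε > 0 and all continuous z₁, z₂ : [0,X/ε] → ℝ^m, max_{1≤i≤m} sup_{ξ∈[0,X/ε]} |Â_i(ε)[z₂](ξ) − Â_i(ε)[z₁](ξ)| ≤ ε C_Φ β · max_{1≤i≤m} sup_{ξ∈[0,X/ε]} |z₂^i(ξ) − z₁^i(ξ)|. In particular, Â(ε) is a contraction on C_m[0,X/ε] whenever ε C_Φ β < 1. -/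
/-!
The terms with `K`, `ȳ'` and `f` cancel in `Â(ε)[z₂] − Â(ε)[z₁]`. By the mean value theorem
`|a_j(εζ) − a_j(εξ)| ≤ ε sup|a_j'| (ξ − ζ)`, so the remaining integrand is bounded by
`ε C_Φ (Σ_j sup|a_j'|) ‖z₂ − z₁‖` times the weight `(1 + s^{m−1}) s e^{−χs}` at `s = ξ − ζ`,
and `∫₀^∞ (s + s^m) e^{−χs} ds = 1/χ² + m!/χ^{m+1}`.
-/

/-- The integral operator `Â(ε)` of the boundary-layer system:
`Â_i(ε)[z](ξ) = −∫₀^ξ K_i(ξ−ζ, εξ) ȳ'(εζ) dζ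
  + ∫₀^ξ L_i(ξ−ζ, εξ) {Σ_j [a_j(εζ) − a_j(εξ)] z^{j+1}(ζ) + f(ζ)} dζ`.
Here `yd` plays the role of `ȳ'` and the component `z j` of `z : Fin m → ℝ → ℝ`
corresponds to `z^{j+1}`. -/
noncomputable def Ahat (m : ℕ) (ε : ℝ) (a : Fin m → ℝ → ℝ) (yd : ℝ → ℝ)
    (K L : Fin m → ℝ → ℝ → ℝ) (f : ℝ → ℝ) (z : Fin m → ℝ → ℝ) (i : Fin m) (ξ : ℝ) : ℝ :=
  -(∫ ζ in (0:ℝ)..ξ, K i (ξ - ζ) (ε * ξ) * yd (ε * ζ)) +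
    ∫ ζ in (0:ℝ)..ξ, L i (ξ - ζ) (ε * ξ) *
      ((∑ j : Fin m, (a j (ε * ζ) - a j (ε * ξ)) * z j ζ) + f ζ)

open MeasureTheory Set Real
open scoped Nat

lemma norm_intervalIntegral_sub_le {E : Type*} [NormedAddCommGroup E] [NormedSpace ℝ E]
    {f g d : ℝ → E} {a b : ℝ} {μ : Measure ℝ} (hfg : ∀ x, f x - g x = d x)
    (hd : IntervalIntegrable d μ a b) :
    ‖(∫ x in a..b, f x ∂μ) - ∫ x in a..b, g x ∂μ‖ ≤ ‖∫ x in a..b, d x ∂μ‖ := by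
  obtain rfl : d = f - g := (funext hfg).symm
  by_cases hg : IntervalIntegrable g μ a b
  · have hf : IntervalIntegrable f μ a b := by simpa using hd.add hg
    rw [← intervalIntegral.integral_sub hf hg]
    rfl
  · have hf : ¬IntervalIntegrable f μ a b := fun hf => hg (by simpa using hf.sub hd)
    simp [intervalIntegral.integral_undef hf, intervalIntegral.integral_undef hg]

lemma integral_pow_mul_exp_neg_mul_Ioi (n : ℕ) {r : ℝ} (hr : 0 < r) :
    ∫ t in Ioi (0 : ℝ), t ^ n * exp (-(r * t)) = n ! / r ^ (n + 1) := by
  have h := integral_rpow_mul_exp_neg_mul_Ioi (a := n + 1) (by positivity) hr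
  rw [add_sub_cancel_right, Gamma_nat_eq_factorial, ← Nat.cast_add_one, rpow_natCast,
    div_pow, one_pow] at h
  simpa [rpow_natCast, div_eq_inv_mul] using h

lemma integrableOn_pow_mul_exp_neg_mul_Ioi (n : ℕ) {r : ℝ} (hr : 0 < r) :
    IntegrableOn (fun t => t ^ n * exp (-(r * t))) (Ioi 0) :=
  .of_integral_ne_zero <| by rw [integral_pow_mul_exp_neg_mul_Ioi n hr]; positivity

lemma intervalIntegral_add_pow_mul_exp_neg_le {n : ℕ} (hn : 1 ≤ n) {r ξ : ℝ} (hr : 0 < r)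
    (hξ : 0 ≤ ξ) :
    ∫ t in (0 : ℝ)..ξ, (t + t ^ n) * exp (-(r * t)) ≤ (r ^ (n - 1) + n !) / r ^ (n + 1) := by
  have h₁ := integrableOn_pow_mul_exp_neg_mul_Ioi 1 hr
  have hₙ := integrableOn_pow_mul_exp_neg_mul_Ioi n hr
  have hsplit : (fun t => (t + t ^ n) * exp (-(r * t)))
      = fun t => t ^ 1 * exp (-(r * t)) + t ^ n * exp (-(r * t)) := by
    ext t; ring
  rw [hsplit, intervalIntegral.integral_of_le hξ]
  calc ∫ t in Ioc 0 ξ, t ^ 1 * exp (-(r * t)) + t ^ n * exp (-(r * t))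
      ≤ ∫ t in Ioi 0, t ^ 1 * exp (-(r * t)) + t ^ n * exp (-(r * t)) := by
        refine setIntegral_mono_set (h₁.add hₙ) ?_ Ioc_subset_Ioi_self.eventuallyLE
        filter_upwards [self_mem_ae_restrict measurableSet_Ioi] with t (ht : 0 < t)
        positivity
    _ = (r ^ (n - 1) + n !) / r ^ (n + 1) := by
        rw [integral_add h₁ hₙ, integral_pow_mul_exp_neg_mul_Ioi 1 hr,
          integral_pow_mul_exp_neg_mul_Ioi n hr]
        obtain ⟨k, rfl⟩ : ∃ k, n = k + 1 := ⟨n - 1, by omega⟩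
        rw [Nat.add_sub_cancel]
        field_simp
        ring

lemma le_ciSup_of_isCompact {α : Type*} [TopologicalSpace α] {f : α → ℝ} {s : Set α}
    (hs : IsCompact s) (hf : ContinuousOn f s) {x : α} (hx : x ∈ s) : f x ≤ ⨆ y : s, f y :=
  le_ciSup (f := fun y : s => f y) (image_eq_range f s ▸ hs.bddAbove_image hf) ⟨x, hx⟩

lemma abs_sub_le_iSup_abs_derivWithin_mul {f : ℝ → ℝ} {a b : ℝ} (hab : a < b)
    (hf : ContDiffOn ℝ 1 f (Icc a b)) {u v : ℝ} (hu : u ∈ Icc a b) (hv : v ∈ Icc a b) :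
    |f u - f v| ≤ (⨆ x : Icc a b, |derivWithin f (Icc a b) x|) * |u - v| := by
  have hderiv := (hf.continuousOn_derivWithin (uniqueDiffOn_Icc hab) le_rfl).abs
  simpa only [Real.norm_eq_abs] using (convex_Icc a b).norm_image_sub_le_of_norm_derivWithin_le
    (hf.differentiableOn one_ne_zero)
    (fun x hx => le_ciSup_of_isCompact isCompact_Icc hderiv hx) hv hu

lemma abs_sum_mul_le {ι : Type*} [Fintype ι] {x y A : ι → ℝ} {δ M : ℝ}
    (hx : ∀ j, |x j| ≤ A j * δ) (hy : ∀ j, |y j| ≤ M) :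
    |∑ j, x j * y j| ≤ (∑ j, A j) * δ * M :=
  calc |∑ j, x j * y j| ≤ ∑ j, |x j| * |y j| := by
        simpa only [abs_mul] using Finset.abs_sum_le_sum_abs (fun j => x j * y j) Finset.univ
    _ ≤ ∑ j, A j * δ * M := Finset.sum_le_sum fun j _ =>
        mul_le_mul (hx j) (hy j) (abs_nonneg _) ((abs_nonneg _).trans (hx j))
    _ = (∑ j, A j) * δ * M := by rw [Finset.sum_mul, Finset.sum_mul]

lemma abs_intervalIntegral_le_of_abs_le_comp_sub {d w : ℝ → ℝ} {ξ : ℝ} (hξ : 0 ≤ ξ)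
    (hd : IntervalIntegrable d volume 0 ξ) (hw : IntervalIntegrable w volume 0 ξ)
    (hdw : ∀ ζ ∈ Icc 0 ξ, |d ζ| ≤ w (ξ - ζ)) :
    |∫ ζ in (0 : ℝ)..ξ, d ζ| ≤ ∫ t in (0 : ℝ)..ξ, w t := by
  have hw' : IntervalIntegrable (fun ζ => w (ξ - ζ)) volume 0 ξ := by
    simpa using (hw.comp_sub_left ξ).symm
  calc |∫ ζ in (0 : ℝ)..ξ, d ζ| ≤ ∫ ζ in (0 : ℝ)..ξ, |d ζ| :=
        intervalIntegral.abs_integral_le_integral_abs hξ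
    _ ≤ ∫ ζ in (0 : ℝ)..ξ, w (ξ - ζ) := intervalIntegral.integral_mono_on hξ hd.abs hw' hdw
    _ = ∫ t in (0 : ℝ)..ξ, w t := by simp [intervalIntegral.integral_comp_sub_left]

lemma abs_Ahat_sub_le {m : ℕ} (hm : 1 ≤ m) {X χ CΦ ε ξ M : ℝ} (hχ : 0 < χ) (hCΦ : 0 ≤ CΦ)
    (hε : 0 ≤ ε) (hξ : 0 ≤ ξ) (hεξ : ε * ξ ≤ X) (hM : 0 ≤ M)
    {a : Fin m → ℝ → ℝ} {A : Fin m → ℝ} (ha : ∀ j, ContinuousOn (a j) (Icc 0 X))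
    (hA : ∀ j, 0 ≤ A j)
    (ha_lip : ∀ j, ∀ u ∈ Icc 0 X, ∀ v ∈ Icc 0 X, |a j u - a j v| ≤ A j * |u - v|)
    {L : Fin m → ℝ → ℝ → ℝ} {i : Fin m} (hLcont : Continuous fun p : ℝ × ℝ => L i p.1 p.2)
    (hL : ∀ s : ℝ, 0 ≤ s → ∀ x ∈ Icc (0 : ℝ) X,
      |L i s x| ≤ CΦ * (1 + s ^ (m - 1)) * exp (-χ * s))
    {z₁ z₂ : Fin m → ℝ → ℝ} (hz₁ : ∀ j, ContinuousOn (z₁ j) (Icc 0 ξ))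
    (hz₂ : ∀ j, ContinuousOn (z₂ j) (Icc 0 ξ))
    (hzM : ∀ j, ∀ ζ ∈ Icc 0 ξ, |z₂ j ζ - z₁ j ζ| ≤ M) (yd : ℝ → ℝ) (K : Fin m → ℝ → ℝ → ℝ)
    (f : ℝ → ℝ) :
    |Ahat m ε a yd K L f z₂ i ξ - Ahat m ε a yd K L f z₁ i ξ|
      ≤ ε * CΦ * (∑ j, A j) * M * ((χ ^ (m - 1) + m !) / χ ^ (m + 1)) := by
  set c := ε * CΦ * (∑ j, A j) * M
  set d : ℝ → ℝ := fun ζ => L i (ξ - ζ) (ε * ξ) *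
    ∑ j, (a j (ε * ζ) - a j (ε * ξ)) * (z₂ j ζ - z₁ j ζ)
  have hεζ : ∀ ζ ∈ Icc 0 ξ, ε * ζ ∈ Icc 0 X := fun ζ hζ =>
    ⟨mul_nonneg hε hζ.1, (mul_le_mul_of_nonneg_left hζ.2 hε).trans hεξ⟩
  have hd_int : IntervalIntegrable d volume 0 ξ := by
    refine ContinuousOn.intervalIntegrable_of_Icc hξ <|
      (hLcont.comp (f := fun ζ => (ξ - ζ, ε * ξ)) (by fun_prop)).continuousOn.mul
        (continuousOn_finsetSum _ fun j _ => ?_)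
    exact (((ha j).comp (by fun_prop) hεζ).sub continuousOn_const).mul ((hz₂ j).sub (hz₁ j))
  have hd_le : ∀ ζ ∈ Icc 0 ξ, |d ζ| ≤ c * ((ξ - ζ + (ξ - ζ) ^ m) * exp (-(χ * (ξ - ζ)))) := by
    intro ζ hζ
    have hs : 0 ≤ ξ - ζ := sub_nonneg.2 hζ.2
    have hsum : |∑ j, (a j (ε * ζ) - a j (ε * ξ)) * (z₂ j ζ - z₁ j ζ)|
        ≤ (∑ j, A j) * (ε * (ξ - ζ)) * M := by
      refine abs_sum_mul_le (fun j => ?_) (fun j => hzM j ζ hζ)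
      have := ha_lip j _ (hεζ ζ hζ) _ (hεζ ξ ⟨hξ, le_rfl⟩)
      rwa [← mul_sub, abs_mul, abs_of_nonneg hε, abs_sub_comm ζ, abs_of_nonneg hs] at this
    have hpow : (ξ - ζ) ^ (m - 1) * (ξ - ζ) = (ξ - ζ) ^ m := by
      rw [← pow_succ, Nat.sub_add_cancel hm]
    calc |d ζ| ≤ (CΦ * (1 + (ξ - ζ) ^ (m - 1)) * exp (-χ * (ξ - ζ)))
          * ((∑ j, A j) * (ε * (ξ - ζ)) * M) := by
          have hLζ := hL _ hs _ (hεζ ξ ⟨hξ, le_rfl⟩)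
          rw [abs_mul]
          exact mul_le_mul hLζ hsum (abs_nonneg _) ((abs_nonneg _).trans hLζ)
      _ = c * ((ξ - ζ + (ξ - ζ) ^ m) * exp (-(χ * (ξ - ζ)))) := by
          rw [neg_mul]
          linear_combination c * exp (-(χ * (ξ - ζ))) * hpow
  have hc : 0 ≤ c := by
    have := Finset.sum_nonneg fun j (_ : j ∈ Finset.univ) => hA j
    positivity
  calc |Ahat m ε a yd K L f z₂ i ξ - Ahat m ε a yd K L f z₁ i ξ|
      ≤ |∫ ζ in (0 : ℝ)..ξ, d ζ| := by
        rw [Ahat, Ahat, add_sub_add_left_eq_sub]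
        refine norm_intervalIntegral_sub_le (fun ζ => ?_) hd_int
        simp only [d, ← mul_sub, ← Finset.sum_sub_distrib, add_sub_add_right_eq_sub]
    _ ≤ ∫ t in (0 : ℝ)..ξ, c * ((t + t ^ m) * exp (-(χ * t))) :=
        abs_intervalIntegral_le_of_abs_le_comp_sub hξ hd_int
          (Continuous.intervalIntegrable (by fun_prop) _ _) hd_le
    _ ≤ c * ((χ ^ (m - 1) + m !) / χ ^ (m + 1)) := by
        rw [intervalIntegral.integral_const_mul]
        exact mul_le_mul_of_nonneg_left (intervalIntegral_add_pow_mul_exp_neg_le hm hχ hξ) hc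

/-- contraction estimate.
With `β := (Σ_j sup_{[0,X]} |a_j'|)(χ^{m−1}+m!)/χ^{m+1}`, for every `ε > 0` and all
continuous `z₁, z₂ : [0, X/ε] → ℝ^m`,
`‖Â(ε)[z₂] − Â(ε)[z₁]‖ ≤ ε C_Φ β ‖z₂ − z₁‖` in the max–sup norm of `C_m[0, X/ε]`;
in particular `Â(ε)` is a contraction whenever `ε C_Φ β < 1`.  The data `ȳ'` (here `yd`),
`K_i` and `f` are arbitrary. -/
theorem Ahat_contraction (m : ℕ) (hm : 2 ≤ m) (X χ CΦ : ℝ)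
    (hX : 0 < X) (hχ : 0 < χ) (hCΦ : 0 < CΦ)
    (a : Fin m → ℝ → ℝ) (ha : ∀ j, ContDiffOn ℝ 1 (a j) (Set.Icc 0 X))
    (L : Fin m → ℝ → ℝ → ℝ)
    (hLcont : ∀ i, Continuous fun p : ℝ × ℝ => L i p.1 p.2)
    (hL : ∀ i, ∀ ξ : ℝ, 0 ≤ ξ → ∀ x ∈ Set.Icc (0:ℝ) X,
      |L i ξ x| ≤ CΦ * (1 + ξ ^ (m - 1)) * Real.exp (-χ * ξ))
    (β : ℝ)
    (hβ : β = (∑ j : Fin m, ⨆ x : Set.Icc (0:ℝ) X, |derivWithin (a j) (Set.Icc 0 X) x|)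
      * (χ ^ (m - 1) + (Nat.factorial m : ℝ)) / χ ^ (m + 1)) :
    ∀ yd : ℝ → ℝ, ∀ K : Fin m → ℝ → ℝ → ℝ, ∀ f : ℝ → ℝ, ∀ ε > (0:ℝ),
      ∀ z₁ z₂ : Fin m → ℝ → ℝ,
        (∀ i, ContinuousOn (z₁ i) (Set.Icc 0 (X / ε))) →
        (∀ i, ContinuousOn (z₂ i) (Set.Icc 0 (X / ε))) →
        (⨆ i : Fin m, ⨆ ξ : Set.Icc (0:ℝ) (X / ε),
            |Ahat m ε a yd K L f z₂ i ξ - Ahat m ε a yd K L f z₁ i ξ|)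
          ≤ ε * CΦ * β *
            ⨆ i : Fin m, ⨆ ξ : Set.Icc (0:ℝ) (X / ε), |z₂ i ξ - z₁ i ξ| := by
  intro yd K f ε hε z₁ z₂ hz₁ hz₂
  set A : Fin m → ℝ := fun j => ⨆ x : Icc (0 : ℝ) X, |derivWithin (a j) (Icc 0 X) x|
  set M := ⨆ i : Fin m, ⨆ ξ : Icc (0 : ℝ) (X / ε), |z₂ i ξ - z₁ i ξ|
  have hA : ∀ j, 0 ≤ A j := fun j => Real.iSup_nonneg fun _ => abs_nonneg _
  have hM : 0 ≤ M := Real.iSup_nonneg fun _ => Real.iSup_nonneg fun _ => abs_nonneg _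
  have hβ' : β = (∑ j, A j) * ((χ ^ (m - 1) + m !) / χ ^ (m + 1)) := by rw [hβ, mul_div_assoc]
  have hβ0 : 0 ≤ β := by
    have := Finset.sum_nonneg fun j (_ : j ∈ Finset.univ) => hA j
    rw [hβ']; positivity
  have hzM : ∀ j, ∀ ζ ∈ Icc 0 (X / ε), |z₂ j ζ - z₁ j ζ| ≤ M := fun j ζ hζ =>
    (le_ciSup_of_isCompact (f := fun ζ => |z₂ j ζ - z₁ j ζ|) isCompact_Icc
      ((hz₂ j).sub (hz₁ j)).abs hζ).trans
      (le_ciSup (f := fun i => ⨆ ξ : Icc (0 : ℝ) (X / ε), |z₂ i ξ - z₁ i ξ|)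
        (finite_range _).bddAbove j)
  refine Real.iSup_le (fun i => Real.iSup_le (fun ⟨ξ, hξ, hξX⟩ => ?_) (by positivity))
    (by positivity)
  have hεξ : ε * ξ ≤ X := by rwa [mul_comm, ← le_div_iff₀ hε]
  have hsub : Icc 0 ξ ⊆ Icc 0 (X / ε) := Icc_subset_Icc_right hξX
  calc _ ≤ ε * CΦ * (∑ j, A j) * M * ((χ ^ (m - 1) + m !) / χ ^ (m + 1)) :=
        abs_Ahat_sub_le (by omega) hχ hCΦ.le hε.le hξ hεξ hM (fun j => (ha j).continuousOn) hA
          (fun j u hu v hv => abs_sub_le_iSup_abs_derivWithin_mul hX (ha j) hu hv) (hLcont i)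
          (hL i) (fun j => (hz₁ j).mono hsub) (fun j => (hz₂ j).mono hsub)
          (fun j ζ hζ => hzM j ζ (hsub hζ)) yd K f
    _ = ε * CΦ * β * M := by rw [hβ']; ring
end

section
/- Let m ≥ 2 and adopt all hypotheses and notation of the ball-invariance statement: X > 0, χ > 0, C_Φ > 0, C̃ ≥ 0, a_j ∈ C¹[0,X], ȳ ∈ C¹[0,X], kernels K_i, L_i bounded by C_Φ(1+ξ^{m−1})e^{−χξ}, functions Π_j bounded by C̃(1+ξ^{m−1})e^{−χξ}, f(ζ;ε) := ε^{−1}Σ_j[a_j(εζ)−a_j(0)]Π_j(ζ), and the operator Â(ε) on C_m[0,X/ε]. Fix γ₀ ∈ (0,1), set α := Σ_j sup|a_j'|, β := α(χ^{m−1}+m!)/χ^{m+1} (assume β > 0), γ := (C̃α·sup_{ζ>0}[(ζ+ζ^m)e^{−χζ}] + sup|ȳ'|)(χ^{m−1}+(m−1)!)/χ^m, ε₀ := γ₀(C_Φβ)^{−1}, C₀ := C_Φγ/(1−γ₀). Then for every ε ∈ (0,ε₀]: (i) Â(ε) has a unique fixed point φ in C_m[0,X/ε]; (ii) ‖φ‖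 ≤ C₀; (iii) for the iterates φ₀ := 0, φ_n := Â(ε)[φ_{n−1}], one has ‖φ − φ_n‖ ≤ C₀(γ₀ ε/ε₀)^n for every n ∈ ℕ. -/
open MeasureTheory Real Set

lemma integrableOn_pow_exp (χ : ℝ) (hχ : 0 < χ) (k : ℕ) :
    IntegrableOn (fun s : ℝ => s ^ k * Real.exp (-χ * s)) (Set.Ioi 0) := by
  have h := integrableOn_rpow_mul_exp_neg_mul_rpow (p := 1) (s := (k:ℝ)) (b := χ)
    (by exact_mod_cast neg_one_lt_zero.trans_le (Nat.cast_nonneg k)) (by norm_num) hχ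
  refine h.congr_fun (fun x hx => ?_) measurableSet_Ioi
  dsimp only; rw [Real.rpow_natCast, Real.rpow_one]

lemma integral_pow_exp_Ioi (χ : ℝ) (hχ : 0 < χ) (k : ℕ) :
    ∫ s in Set.Ioi (0:ℝ), s ^ k * Real.exp (-χ * s) = (k.factorial : ℝ) / χ ^ (k+1) := by
  have h := Real.integral_rpow_mul_exp_neg_mul_Ioi (a := (k:ℝ)+1) (r := χ) (by positivity) hχ
  simp only [add_sub_cancel_right] at h
  rw [show ∫ s in Set.Ioi (0:ℝ), s ^ k * Real.exp (-χ * s)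
      = ∫ t in Set.Ioi (0:ℝ), t ^ ((k:ℝ)) * Real.exp (-(χ * t)) from
    setIntegral_congr_fun measurableSet_Ioi (fun x hx => by
      rw [Real.rpow_natCast, neg_mul]), h]
  rw [Real.Gamma_nat_eq_factorial]
  rw [show ((k:ℝ)+1) = ((k+1 : ℕ) : ℝ) by push_cast; ring, Real.rpow_natCast]
  rw [div_pow, one_pow]
  field_simp

lemma integral_pow_exp_le (χ : ℝ) (hχ : 0 < χ) (k : ℕ) {T : ℝ} (hT : 0 ≤ T) :
    ∫ s in (0:ℝ)..T, s ^ k * Real.exp (-χ * s) ≤ (k.factorial : ℝ) / χ ^ (k+1) := by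
  rw [intervalIntegral.integral_of_le hT, ← integral_pow_exp_Ioi χ hχ k]
  apply setIntegral_mono_set (integrableOn_pow_exp χ hχ k)
  · filter_upwards [ae_restrict_mem measurableSet_Ioi] with x hx
    have : (0:ℝ) < x := hx
    positivity
  · exact Filter.Eventually.of_forall (fun x hx => hx.1)

lemma pow_mul_exp_neg_le {χ : ℝ} (hχ : 0 < χ) (k : ℕ) {s : ℝ} (hs : 0 ≤ s) :
    s ^ k * Real.exp (-χ * s) ≤ (k.factorial : ℝ) / χ ^ k := by
  have h := Real.pow_div_factorial_le_exp (x := χ * s) (by positivity) k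
  rw [div_le_iff₀ (by positivity)] at h
  rw [neg_mul, Real.exp_neg, ← div_eq_mul_inv,
    div_le_div_iff₀ (Real.exp_pos _) (by positivity : (0:ℝ) < χ ^ k)]
  calc s ^ k * χ ^ k = (χ * s) ^ k := by rw [mul_pow]; ring
    _ ≤ Real.exp (χ * s) * (k.factorial : ℝ) := h
    _ = (k.factorial : ℝ) * Real.exp (χ * s) := mul_comm _ _

lemma integral_two_pow_exp_le {χ : ℝ} (hχ : 0 < χ) (p r : ℕ) {ξ : ℝ} (hξ : 0 ≤ ξ) :
    ∫ s in (0:ℝ)..ξ, (s ^ p + s ^ r) * Real.exp (-χ * s)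
      ≤ (p.factorial : ℝ) / χ ^ (p+1) + (r.factorial : ℝ) / χ ^ (r+1) := by
  have h1 : IntervalIntegrable (fun s : ℝ => s ^ p * Real.exp (-χ * s)) volume 0 ξ :=
    (by continuity : Continuous fun s : ℝ => s ^ p * Real.exp (-χ * s)).intervalIntegrable _ _
  have h2 : IntervalIntegrable (fun s : ℝ => s ^ r * Real.exp (-χ * s)) volume 0 ξ :=
    (by continuity : Continuous fun s : ℝ => s ^ r * Real.exp (-χ * s)).intervalIntegrable _ _
  rw [show (fun s : ℝ => (s ^ p + s ^ r) * Real.exp (-χ * s))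
      = fun s : ℝ => s ^ p * Real.exp (-χ * s) + s ^ r * Real.exp (-χ * s) by
      funext s; ring]
  rw [intervalIntegral.integral_add h1 h2]
  exact add_le_add (integral_pow_exp_le χ hχ p hξ) (integral_pow_exp_le χ hχ r hξ)

/-- Generic bound for the integral operators. -/
lemma abs_integral_le_aux {χ CΦ : ℝ} (hχ : 0 < χ) (hCΦ : 0 ≤ CΦ) (p r : ℕ) {c : ℝ} (hc : 0 ≤ c)
    {ξ : ℝ} (hξ : 0 ≤ ξ) {u : ℝ → ℝ} (hu : Continuous u)
    (hbound : ∀ ζ ∈ Set.Icc 0 ξ,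
      |u ζ| ≤ CΦ * (((ξ-ζ) ^ p + (ξ-ζ) ^ r) * Real.exp (-χ * (ξ-ζ))) * c) :
    |∫ ζ in (0:ℝ)..ξ, u ζ|
      ≤ CΦ * c * ((p.factorial : ℝ) / χ ^ (p+1) + (r.factorial : ℝ) / χ ^ (r+1)) := by
  have hcont : Continuous fun ζ : ℝ =>
      CΦ * (((ξ-ζ) ^ p + (ξ-ζ) ^ r) * Real.exp (-χ * (ξ-ζ))) * c := by continuity
  calc |∫ ζ in (0:ℝ)..ξ, u ζ| ≤ ∫ ζ in (0:ℝ)..ξ, |u ζ| := by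
        simpa [Real.norm_eq_abs] using
          intervalIntegral.norm_integral_le_integral_norm (f := u) (a := 0) (b := ξ) hξ
    _ ≤ ∫ ζ in (0:ℝ)..ξ, CΦ * (((ξ-ζ) ^ p + (ξ-ζ) ^ r) * Real.exp (-χ * (ξ-ζ))) * c := by
        apply intervalIntegral.integral_mono_on hξ (hu.abs.intervalIntegrable _ _)
          (hcont.intervalIntegrable _ _) hbound
    _ = CΦ * c * ∫ ζ in (0:ℝ)..ξ, ((ξ-ζ) ^ p + (ξ-ζ) ^ r) * Real.exp (-χ * (ξ-ζ)) := by
        rw [← intervalIntegral.integral_const_mul]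
        apply intervalIntegral.integral_congr
        intro ζ _; ring
    _ = CΦ * c * ∫ s in (0:ℝ)..ξ, (s ^ p + s ^ r) * Real.exp (-χ * s) := by
        rw [intervalIntegral.integral_comp_sub_left
          (fun s => (s ^ p + s ^ r) * Real.exp (-χ * s)) ξ]
        norm_num
    _ ≤ CΦ * c * ((p.factorial : ℝ) / χ ^ (p+1) + (r.factorial : ℝ) / χ ^ (r+1)) := by
        apply mul_le_mul_of_nonneg_left (integral_two_pow_exp_le hχ p r hξ) (by positivity)

lemma Ahat_congr (m : ℕ) (ε : ℝ) (a a' : Fin m → ℝ → ℝ) (yd yd' : ℝ → ℝ)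
    (K L : Fin m → ℝ → ℝ → ℝ) (f f' : ℝ → ℝ) (z z' : Fin m → ℝ → ℝ) (i : Fin m)
    {ξ : ℝ} (hξ : 0 ≤ ξ)
    (hyd : ∀ ζ ∈ Set.Icc 0 ξ, yd (ε * ζ) = yd' (ε * ζ))
    (ha : ∀ j, ∀ ζ ∈ Set.Icc 0 ξ, a j (ε * ζ) = a' j (ε * ζ))
    (haξ : ∀ j, a j (ε * ξ) = a' j (ε * ξ))
    (hf : ∀ ζ ∈ Set.Icc 0 ξ, f ζ = f' ζ)
    (hz : ∀ j, ∀ ζ ∈ Set.Icc 0 ξ, z j ζ = z' j ζ) :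
    Ahat m ε a yd K L f z i ξ = Ahat m ε a' yd' K L f' z' i ξ := by
  unfold Ahat
  have huIcc : Set.uIcc (0:ℝ) ξ = Set.Icc 0 ξ := Set.uIcc_of_le hξ
  congr 1
  · congr 1
    apply intervalIntegral.integral_congr
    intro ζ hζ
    rw [huIcc] at hζ
    simp only []
    rw [hyd ζ hζ]
  · apply intervalIntegral.integral_congr
    intro ζ hζ
    rw [huIcc] at hζ
    simp only []
    rw [hf ζ hζ]
    congr 2
    exact Finset.sum_congr rfl fun j _ => by rw [ha j ζ hζ, haξ j, hz j ζ hζ]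

set_option maxHeartbeats 4000000 in
/-- Banach fixed point and asymptotic iterations for `Â(ε)`.
With `α := Σ_j sup|a_j'|`, `β := α(χ^{m−1}+m!)/χ^{m+1} > 0`,
`γ := (C̃ α sup_{ζ>0}[(ζ+ζ^m)e^{−χζ}] + sup|ȳ'|)(χ^{m−1}+(m−1)!)/χ^m`,
`ε₀ := γ₀ (C_Φ β)⁻¹` and `C₀ := C_Φ γ/(1−γ₀)` (for a fixed `γ₀ ∈ (0,1)`), the operator
`Â(ε)` has, for every `ε ∈ (0, ε₀]`, a unique fixed point `φ` in `C_m[0, X/ε]`; it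
satisfies `‖φ‖ ≤ C₀`, and the iterates `φ₀ := 0`, `φ_n := Â(ε)[φ_{n−1}]` satisfy
`‖φ − φ_n‖ ≤ C₀ (γ₀ ε/ε₀)^n` for every `n`. -/
theorem Ahat_fixed_point (m : ℕ) (hm : 2 ≤ m) (X χ CΦ Ct γ₀ : ℝ)
    (hX : 0 < X) (hχ : 0 < χ) (hCΦ : 0 < CΦ) (hCt : 0 ≤ Ct)
    (hγ₀ : γ₀ ∈ Set.Ioo (0:ℝ) 1)
    (a : Fin m → ℝ → ℝ) (ha : ∀ j, ContDiffOn ℝ 1 (a j) (Set.Icc 0 X))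
    (ybar : ℝ → ℝ) (hybar : ContDiffOn ℝ 1 ybar (Set.Icc 0 X))
    (K L : Fin m → ℝ → ℝ → ℝ)
    (hKcont : ∀ i, Continuous fun p : ℝ × ℝ => K i p.1 p.2)
    (hLcont : ∀ i, Continuous fun p : ℝ × ℝ => L i p.1 p.2)
    (hK : ∀ i, ∀ ξ : ℝ, 0 ≤ ξ → ∀ x ∈ Set.Icc (0:ℝ) X,
      |K i ξ x| ≤ CΦ * (1 + ξ ^ (m - 1)) * Real.exp (-χ * ξ))
    (hL : ∀ i, ∀ ξ : ℝ, 0 ≤ ξ → ∀ x ∈ Set.Icc (0:ℝ) X,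
      |L i ξ x| ≤ CΦ * (1 + ξ ^ (m - 1)) * Real.exp (-χ * ξ))
    (B : Fin m → ℝ → ℝ) (hBcont : ∀ j, Continuous (B j))
    (hB : ∀ j, ∀ ξ : ℝ, 0 ≤ ξ → |B j ξ| ≤ Ct * (1 + ξ ^ (m - 1)) * Real.exp (-χ * ξ))
    (α β γ ε₀ C₀ : ℝ)
    (hα : α = ∑ j : Fin m, ⨆ x : Set.Icc (0:ℝ) X, |derivWithin (a j) (Set.Icc 0 X) x|)
    (hβ : β = α * (χ ^ (m - 1) + (Nat.factorial m : ℝ)) / χ ^ (m + 1)) (hβpos : 0 < β)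
    (hγ : γ = (Ct * α * (⨆ ζ : Set.Ioi (0:ℝ), ((ζ:ℝ) + (ζ:ℝ) ^ m) * Real.exp (-χ * ζ))
        + ⨆ x : Set.Icc (0:ℝ) X, |derivWithin ybar (Set.Icc 0 X) x|)
      * (χ ^ (m - 1) + (Nat.factorial (m - 1) : ℝ)) / χ ^ m)
    (hε₀ : ε₀ = γ₀ * (CΦ * β)⁻¹) (hC₀ : C₀ = CΦ * γ / (1 - γ₀)) :
    ∀ ε ∈ Set.Ioc (0:ℝ) ε₀,
      ∃ φ : Fin m → ℝ → ℝ,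
        (∀ i, ContinuousOn (φ i) (Set.Icc 0 (X / ε))) ∧
        -- (i) `φ` is a fixed point of `Â(ε)` …
        (∀ i, ∀ ξ ∈ Set.Icc (0:ℝ) (X / ε),
          Ahat m ε a (derivWithin ybar (Set.Icc 0 X)) K L
            (fun ζ => ε⁻¹ * ∑ j : Fin m, (a j (ε * ζ) - a j 0) * B j ζ) φ i ξ = φ i ξ) ∧
        -- … and it is the unique such fixed point in `C_m[0, X/ε]`
        (∀ ψ : Fin m → ℝ → ℝ,
          (∀ i, ContinuousOn (ψ i) (Set.Icc 0 (X / ε))) →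
          (∀ i, ∀ ξ ∈ Set.Icc (0:ℝ) (X / ε),
            Ahat m ε a (derivWithin ybar (Set.Icc 0 X)) K L
              (fun ζ => ε⁻¹ * ∑ j : Fin m, (a j (ε * ζ) - a j 0) * B j ζ) ψ i ξ = ψ i ξ) →
          ∀ i, ∀ ξ ∈ Set.Icc (0:ℝ) (X / ε), ψ i ξ = φ i ξ) ∧
        -- (ii) `‖φ‖ ≤ C₀`
        (∀ i, ∀ ξ ∈ Set.Icc (0:ℝ) (X / ε), |φ i ξ| ≤ C₀) ∧
        -- (iii) the iterates `φ₀ = 0`, `φ_n = Â(ε)[φ_{n−1}]` converge at the rate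
        -- `‖φ − φ_n‖ ≤ C₀ (γ₀ ε/ε₀)^n`
        (∀ Z : ℕ → Fin m → ℝ → ℝ,
          Z 0 = (fun _ _ => 0) →
          (∀ n, Z (n + 1) = Ahat m ε a (derivWithin ybar (Set.Icc 0 X)) K L
            (fun ζ => ε⁻¹ * ∑ j : Fin m, (a j (ε * ζ) - a j 0) * B j ζ) (Z n)) →
          ∀ n : ℕ, ∀ i, ∀ ξ ∈ Set.Icc (0:ℝ) (X / ε),
            |φ i ξ - Z n i ξ| ≤ C₀ * (γ₀ * ε / ε₀) ^ n) := by
  obtain ⟨k, rfl⟩ : ∃ k, m = k + 2 := ⟨m - 2, by omega⟩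
  clear hm
  simp only [show k + 2 - 1 = k + 1 from rfl] at hK hL hB hβ hγ
  obtain ⟨hγ₀0, hγ₀1⟩ := hγ₀
  intro ε hε
  obtain ⟨hε0, hεε₀⟩ := hε
  have hαnn : 0 ≤ α := by
    rw [hα]
    exact Finset.sum_nonneg fun j _ => Real.iSup_nonneg fun x => abs_nonneg _
  have hCβ : 0 < CΦ * β := by positivity
  have hε₀pos : 0 < ε₀ := by rw [hε₀]; positivity
  set T := X / ε with hTdef
  have hT : 0 < T := div_pos hX hε0
  have hεT : ε * T = X := by rw [hTdef]; field_simp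
  have hmemX : ∀ ζ : ℝ, 0 ≤ ζ → ζ ≤ T → ε * ζ ∈ Set.Icc (0:ℝ) X := by
    intro ζ h0 h1
    constructor
    · positivity
    · calc ε * ζ ≤ ε * T := by nlinarith
        _ = X := hεT
  have hud : UniqueDiffOn ℝ (Set.Icc (0:ℝ) X) := uniqueDiffOn_Icc hX
  set yd := derivWithin ybar (Set.Icc (0:ℝ) X) with hyddef
  have hydc : ContinuousOn yd (Set.Icc 0 X) := by
    have := hybar.derivWithin hud (m := 0) (by norm_num)
    exact this.continuousOn
  set pr : ℝ → ↥(Set.Icc (0:ℝ) X) := Set.projIcc 0 X hX.le with hprdef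
  have hprlip : ∀ x y : ℝ, |((pr x : ℝ)) - (pr y : ℝ)| ≤ |x - y| := by
    intro x y
    have := LipschitzWith.dist_le_mul
      (LipschitzWith.projIcc (a := (0:ℝ)) (b := X) (h := hX.le)) x y
    simpa [hprdef, Real.dist_eq, Subtype.dist_eq] using this
  set aE : Fin (k+2) → ℝ → ℝ := fun j x => a j (pr x) with haEdef
  set ydE : ℝ → ℝ := fun x => yd (pr x) with hydEdef
  have hprcont : Continuous fun x : ℝ => ((pr x : ℝ)) :=
    continuous_subtype_val.comp continuous_projIcc
  have haEc : ∀ j, Continuous (aE j) := fun j =>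
    (ha j).continuousOn.comp_continuous hprcont (fun x => (pr x).2)
  have hydEc : Continuous ydE := hydc.comp_continuous hprcont (fun x => (pr x).2)
  have haEeq : ∀ j, ∀ x ∈ Set.Icc (0:ℝ) X, aE j x = a j x := by
    intro j x hx
    simp [haEdef, hprdef, Set.projIcc_of_mem hX.le hx]
  have hydEeq : ∀ x ∈ Set.Icc (0:ℝ) X, ydE x = yd x := by
    intro x hx
    simp [hydEdef, hprdef, Set.projIcc_of_mem hX.le hx]
  -- bounds on the derivatives
  set αj : Fin (k+2) → ℝ := fun j =>
    ⨆ x : Set.Icc (0:ℝ) X, |derivWithin (a j) (Set.Icc 0 X) x| with hαjdef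
  have hαj_nn : ∀ j, 0 ≤ αj j := fun j => Real.iSup_nonneg fun x => abs_nonneg _
  have hαsum : α = ∑ j, αj j := hα
  have hbddrange : ∀ (f : ℝ → ℝ), ContinuousOn f (Set.Icc (0:ℝ) X) →
      BddAbove (Set.range fun x : Set.Icc (0:ℝ) X => |f x|) := by
    intro f hf
    rw [← Set.image_univ]
    refine ((isCompact_Icc (a := (0:ℝ)) (b := X)).image_of_continuousOn hf.abs).bddAbove.mono ?_
    rintro y ⟨x, -, rfl⟩; exact ⟨x, x.2, rfl⟩
  have hda : ∀ j, ∀ t ∈ Set.Icc (0:ℝ) X, |derivWithin (a j) (Set.Icc 0 X) t| ≤ αj j := by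
    intro j t ht
    exact le_ciSup (hbddrange _ ((ha j).derivWithin hud (m := 0) (by norm_num)).continuousOn)
      (⟨t, ht⟩ : Set.Icc (0:ℝ) X)
  have haLip : ∀ j (x y : ℝ), |aE j x - aE j y| ≤ αj j * |x - y| := by
    intro j x y
    have hdiff : DifferentiableOn ℝ (a j) (Set.Icc 0 X) :=
      (ha j).differentiableOn one_ne_zero
    have h1 := (convex_Icc (0:ℝ) X).norm_image_sub_le_of_norm_derivWithin_le hdiff
      (fun t ht => by simpa [Real.norm_eq_abs] using hda j t ht) (pr y).2 (pr x).2
    calc |aE j x - aE j y| ≤ αj j * |((pr x : ℝ)) - ((pr y : ℝ))| := by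
          simpa [haEdef, Real.norm_eq_abs] using h1
      _ ≤ αj j * |x - y| := mul_le_mul_of_nonneg_left (hprlip x y) (hαj_nn j)
  set Y := ⨆ x : Set.Icc (0:ℝ) X, |yd x| with hYdef
  have hYnn : 0 ≤ Y := Real.iSup_nonneg fun x => abs_nonneg _
  have hydb : ∀ x, |ydE x| ≤ Y := by
    intro x
    exact le_ciSup (hbddrange _ hydc) (pr x)
  set M := ⨆ ζ : Set.Ioi (0:ℝ), ((ζ:ℝ) + (ζ:ℝ) ^ (k+2)) * Real.exp (-χ * ζ) with hMdef
  have hMnn : 0 ≤ M := Real.iSup_nonneg fun ζ =>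
    mul_nonneg (by have h : (0:ℝ) ≤ ζ := le_of_lt (Set.mem_Ioi.mp ζ.2); positivity) (Real.exp_pos _).le
  have hMb : ∀ s : ℝ, 0 ≤ s → (s + s ^ (k+2)) * Real.exp (-χ * s) ≤ M := by
    intro s hs
    rcases eq_or_lt_of_le hs with h | h
    · rw [← h]; simpa using hMnn
    · have hbdd : BddAbove (Set.range fun ζ : Set.Ioi (0:ℝ) =>
          ((ζ:ℝ) + (ζ:ℝ) ^ (k+2)) * Real.exp (-χ * ζ)) := by
        refine ⟨(Nat.factorial 1 : ℝ) / χ ^ 1 + (Nat.factorial (k+2) : ℝ) / χ ^ (k+2), ?_⟩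
        rintro y ⟨ζ, rfl⟩
        have hζ : (0:ℝ) ≤ (ζ : ℝ) := le_of_lt ζ.2
        calc ((ζ:ℝ) + (ζ:ℝ) ^ (k+2)) * Real.exp (-χ * ζ)
            = (ζ:ℝ) ^ 1 * Real.exp (-χ * ζ) + (ζ:ℝ) ^ (k+2) * Real.exp (-χ * ζ) := by ring
          _ ≤ _ := add_le_add (pow_mul_exp_neg_le hχ 1 hζ) (pow_mul_exp_neg_le hχ (k+2) hζ)
      exact le_ciSup hbdd (⟨s, h⟩ : Set.Ioi (0:ℝ))
  -- the inhomogeneity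
  set fE : ℝ → ℝ := fun ζ => ε⁻¹ * ∑ j, (aE j (ε * ζ) - aE j 0) * B j ζ with hfEdef
  have hfEc : Continuous fE := by
    apply continuous_const.mul
    exact continuous_finset_sum _ fun j _ =>
      (((haEc j).comp (continuous_const.mul continuous_id)).sub continuous_const).mul (hBcont j)
  have hfEb : ∀ ζ : ℝ, 0 ≤ ζ → |fE ζ| ≤ α * Ct * M := by
    intro ζ hζ
    have h1 : |∑ j, (aE j (ε * ζ) - aE j 0) * B j ζ|
        ≤ ∑ j, αj j * ((ε * ζ) * (Ct * (1 + ζ ^ (k+1)) * Real.exp (-χ * ζ))) := by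
      refine (Finset.abs_sum_le_sum_abs _ _).trans (Finset.sum_le_sum fun j _ => ?_)
      rw [abs_mul]
      have ha1 : |aE j (ε * ζ) - aE j 0| ≤ αj j * (ε * ζ) := by
        have := haLip j (ε * ζ) 0
        simpa [abs_of_nonneg (by positivity : (0:ℝ) ≤ ε * ζ)] using this
      have hb1 : |B j ζ| ≤ Ct * (1 + ζ ^ (k+1)) * Real.exp (-χ * ζ) := hB j ζ hζ
      calc |aE j (ε * ζ) - aE j 0| * |B j ζ|
          ≤ (αj j * (ε * ζ)) * (Ct * (1 + ζ ^ (k+1)) * Real.exp (-χ * ζ)) :=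
            mul_le_mul ha1 hb1 (abs_nonneg _) (mul_nonneg (hαj_nn j) (by positivity))
        _ = αj j * ((ε * ζ) * (Ct * (1 + ζ ^ (k+1)) * Real.exp (-χ * ζ))) := by ring
    have h2 : ∑ j, αj j * ((ε * ζ) * (Ct * (1 + ζ ^ (k+1)) * Real.exp (-χ * ζ)))
        = α * ((ε * ζ) * (Ct * (1 + ζ ^ (k+1)) * Real.exp (-χ * ζ))) := by
      rw [hαsum, Finset.sum_mul]
    calc |fE ζ| = ε⁻¹ * |∑ j, (aE j (ε * ζ) - aE j 0) * B j ζ| := by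
          rw [hfEdef]; simp [abs_mul, abs_of_nonneg (le_of_lt (inv_pos.2 hε0))]
      _ ≤ ε⁻¹ * (α * ((ε * ζ) * (Ct * (1 + ζ ^ (k+1)) * Real.exp (-χ * ζ)))) := by
          rw [← h2]
          exact mul_le_mul_of_nonneg_left h1 (le_of_lt (inv_pos.2 hε0))
      _ = α * Ct * ((ζ + ζ ^ (k+2)) * Real.exp (-χ * ζ)) := by
          field_simp
          ring
      _ ≤ α * Ct * M := mul_le_mul_of_nonneg_left (hMb ζ hζ) (by positivity)
  -- extension operator from the function space on `[0,T]`
  set ext : (Fin (k+2) → C(Set.Icc (0:ℝ) T, ℝ)) → Fin (k+2) → ℝ → ℝ :=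
    fun z j t => z j (Set.projIcc 0 T hT.le t) with hextdef
  have hextc : ∀ z j, Continuous (ext z j) := fun z j =>
    (z j).continuous.comp continuous_projIcc
  have hext_eq : ∀ z j, ∀ t : ℝ, ∀ ht : t ∈ Set.Icc (0:ℝ) T, ext z j t = z j ⟨t, ht⟩ := by
    intro z j t ht
    simp [hextdef, Set.projIcc_of_mem hT.le ht]
  have hext_le : ∀ z w j (t : ℝ), |ext z j t - ext w j t| ≤ dist z w := by
    intro z w j t
    have h1 : dist (z j (Set.projIcc 0 T hT.le t)) (w j (Set.projIcc 0 T hT.le t))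
        ≤ dist (z j) (w j) := ContinuousMap.dist_apply_le_dist _
    have h2 : dist (z j) (w j) ≤ dist z w := dist_le_pi_dist z w j
    simpa [hextdef, Real.dist_eq] using h1.trans h2
  -- continuity of the operator
  have hcont2 : ∀ z : Fin (k+2) → C(Set.Icc (0:ℝ) T, ℝ), ∀ i, Continuous fun ξ : ℝ =>
      Ahat (k+2) ε aE ydE K L fE (ext z) i ξ := by
    intro z i
    unfold Ahat
    apply Continuous.add
    · apply Continuous.neg
      apply intervalIntegral.continuous_parametric_intervalIntegral_of_continuous
        (f := fun (ξ ζ : ℝ) => K i (ξ - ζ) (ε * ξ) * ydE (ε * ζ)) ?_ continuous_id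
      exact ((hKcont i).comp (by fun_prop :
          Continuous fun p : ℝ × ℝ => ((p.1 - p.2 : ℝ), (ε * p.1 : ℝ)))).mul
        (hydEc.comp (by fun_prop))
    · apply intervalIntegral.continuous_parametric_intervalIntegral_of_continuous
        (f := fun (ξ ζ : ℝ) => L i (ξ - ζ) (ε * ξ) *
          ((∑ j, (aE j (ε * ζ) - aE j (ε * ξ)) * ext z j ζ) + fE ζ)) ?_ continuous_id
      apply Continuous.mul
      · exact (hLcont i).comp (by fun_prop :
          Continuous fun p : ℝ × ℝ => ((p.1 - p.2 : ℝ), (ε * p.1 : ℝ)))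
      · apply Continuous.add
        · apply continuous_finset_sum
          intro j _
          exact (((haEc j).comp (by fun_prop)).sub ((haEc j).comp (by fun_prop))).mul
            ((hextc z j).comp continuous_snd)
        · exact hfEc.comp continuous_snd
  set F : (Fin (k+2) → C(Set.Icc (0:ℝ) T, ℝ)) → (Fin (k+2) → C(Set.Icc (0:ℝ) T, ℝ)) :=
    fun z i => ⟨fun x => Ahat (k+2) ε aE ydE K L fE (ext z) i x,
      (hcont2 z i).comp continuous_subtype_val⟩ with hFdef
  -- the two estimates
  have est1 : ∀ z w : Fin (k+2) → C(Set.Icc (0:ℝ) T, ℝ), ∀ i, ∀ ξ : ℝ, 0 ≤ ξ → ξ ≤ T →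
      |Ahat (k+2) ε aE ydE K L fE (ext z) i ξ - Ahat (k+2) ε aE ydE K L fE (ext w) i ξ|
        ≤ (ε * (CΦ * β)) * dist z w := by
    intro z w i ξ h0 hξT
    have hD0 : (0:ℝ) ≤ dist z w := dist_nonneg
    have hLcz : Continuous fun ζ : ℝ => L i (ξ - ζ) (ε * ξ) :=
      (hLcont i).comp (show Continuous fun ζ : ℝ => ((ξ - ζ : ℝ), (ε * ξ : ℝ)) by fun_prop)
    have hSz : ∀ u : Fin (k+2) → C(Set.Icc (0:ℝ) T, ℝ), Continuous fun ζ : ℝ =>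
        (∑ j, (aE j (ε * ζ) - aE j (ε * ξ)) * ext u j ζ) + fE ζ := by
      intro u
      apply Continuous.add
      · exact continuous_finset_sum _ fun j _ =>
          (((haEc j).comp (by fun_prop)).sub continuous_const).mul (hextc u j)
      · exact hfEc
    have hSzw : Continuous fun ζ : ℝ =>
        ∑ j, (aE j (ε * ζ) - aE j (ε * ξ)) * (ext z j ζ - ext w j ζ) :=
      continuous_finset_sum _ fun j _ =>
        (((haEc j).comp (by fun_prop)).sub continuous_const).mul
          ((hextc z j).sub (hextc w j))
    have hsplit : Ahat (k+2) ε aE ydE K L fE (ext z) i ξ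
          - Ahat (k+2) ε aE ydE K L fE (ext w) i ξ
        = ∫ ζ in (0:ℝ)..ξ, L i (ξ - ζ) (ε * ξ) *
            (∑ j, (aE j (ε * ζ) - aE j (ε * ξ)) * (ext z j ζ - ext w j ζ)) := by
      have e1 : Ahat (k+2) ε aE ydE K L fE (ext z) i ξ
            - Ahat (k+2) ε aE ydE K L fE (ext w) i ξ
          = (∫ ζ in (0:ℝ)..ξ, L i (ξ - ζ) (ε * ξ) *
              ((∑ j, (aE j (ε * ζ) - aE j (ε * ξ)) * ext z j ζ) + fE ζ))
            - ∫ ζ in (0:ℝ)..ξ, L i (ξ - ζ) (ε * ξ) *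
              ((∑ j, (aE j (ε * ζ) - aE j (ε * ξ)) * ext w j ζ) + fE ζ) := by
        unfold Ahat
        ring
      rw [e1, ← intervalIntegral.integral_sub
        (f := fun ζ => L i (ξ - ζ) (ε * ξ) *
          ((∑ j, (aE j (ε * ζ) - aE j (ε * ξ)) * ext z j ζ) + fE ζ))
        (g := fun ζ => L i (ξ - ζ) (ε * ξ) *
          ((∑ j, (aE j (ε * ζ) - aE j (ε * ξ)) * ext w j ζ) + fE ζ))
        ((hLcz.mul (hSz z)).intervalIntegrable _ _)
        ((hLcz.mul (hSz w)).intervalIntegrable _ _)]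
      apply intervalIntegral.integral_congr
      intro ζ _
      simp only []
      rw [← mul_sub, add_sub_add_right_eq_sub, ← Finset.sum_sub_distrib]
      congr 1
      exact Finset.sum_congr rfl fun j _ => (mul_sub _ _ _).symm
    rw [hsplit]
    have hbound : ∀ ζ ∈ Set.Icc (0:ℝ) ξ,
        |L i (ξ - ζ) (ε * ξ) *
            (∑ j, (aE j (ε * ζ) - aE j (ε * ξ)) * (ext z j ζ - ext w j ζ))|
          ≤ CΦ * (((ξ-ζ) ^ 1 + (ξ-ζ) ^ (k+2)) * Real.exp (-χ * (ξ-ζ)))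
            * (α * ε * dist z w) := by
      intro ζ hζ
      have hs0 : 0 ≤ ξ - ζ := sub_nonneg.2 hζ.2
      have hLb : |L i (ξ-ζ) (ε*ξ)| ≤ CΦ * (1 + (ξ-ζ) ^ (k+1)) * Real.exp (-χ * (ξ-ζ)) :=
        hL i _ hs0 _ (hmemX ξ h0 hξT)
      have hSb : |∑ j, (aE j (ε * ζ) - aE j (ε * ξ)) * (ext z j ζ - ext w j ζ)|
          ≤ α * (ε * (ξ - ζ)) * dist z w := by
        refine (Finset.abs_sum_le_sum_abs _ _).trans ?_
        have hterm : ∀ j ∈ Finset.univ,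
            |(aE j (ε * ζ) - aE j (ε * ξ)) * (ext z j ζ - ext w j ζ)|
              ≤ αj j * (ε * (ξ - ζ)) * dist z w := by
          intro j _
          rw [abs_mul]
          have h1 : |aE j (ε * ζ) - aE j (ε * ξ)| ≤ αj j * (ε * (ξ - ζ)) := by
            have h2 := haLip j (ε * ζ) (ε * ξ)
            have heq : |ε * ζ - ε * ξ| = ε * (ξ - ζ) := by
              rw [abs_sub_comm, ← mul_sub, abs_mul, abs_of_nonneg hε0.le,
                abs_of_nonneg hs0]
            rw [heq] at h2
            exact h2
          exact mul_le_mul h1 (hext_le z w j ζ) (abs_nonneg _)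
            (mul_nonneg (hαj_nn j) (by positivity))
        refine (Finset.sum_le_sum hterm).trans ?_
        rw [← Finset.sum_mul, ← Finset.sum_mul, ← hαsum]
      calc |L i (ξ - ζ) (ε * ξ) *
            (∑ j, (aE j (ε * ζ) - aE j (ε * ξ)) * (ext z j ζ - ext w j ζ))|
          = |L i (ξ - ζ) (ε * ξ)| *
            |∑ j, (aE j (ε * ζ) - aE j (ε * ξ)) * (ext z j ζ - ext w j ζ)| := abs_mul _ _
        _ ≤ (CΦ * (1 + (ξ-ζ) ^ (k+1)) * Real.exp (-χ * (ξ-ζ)))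
            * (α * (ε * (ξ - ζ)) * dist z w) :=
            mul_le_mul hLb hSb (abs_nonneg _) (by positivity)
        _ = CΦ * (((ξ-ζ) ^ 1 + (ξ-ζ) ^ (k+2)) * Real.exp (-χ * (ξ-ζ)))
            * (α * ε * dist z w) := by ring
    have happ := abs_integral_le_aux hχ hCΦ.le 1 (k+2)
      (c := α * ε * dist z w) (by positivity) h0 (hLcz.mul hSzw) hbound
    refine happ.trans (le_of_eq ?_)
    rw [hβ]
    have hfac1 : (Nat.factorial 1 : ℝ) = 1 := by norm_num
    rw [hfac1]
    field_simp
    ring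
  have est0 : ∀ i, ∀ ξ : ℝ, 0 ≤ ξ → ξ ≤ T →
      |Ahat (k+2) ε aE ydE K L fE
        (ext (0 : Fin (k+2) → C(Set.Icc (0:ℝ) T, ℝ))) i ξ| ≤ CΦ * γ := by
    intro i ξ h0 hξT
    have hz0 : ∀ j (ζ:ℝ), ext (0 : Fin (k+2) → C(Set.Icc (0:ℝ) T, ℝ)) j ζ = 0 :=
      fun j ζ => rfl
    have hu1 : Continuous fun ζ : ℝ => K i (ξ - ζ) (ε * ξ) * ydE (ε * ζ) :=
      ((hKcont i).comp
          (show Continuous fun ζ : ℝ => ((ξ - ζ : ℝ), (ε * ξ : ℝ)) by fun_prop)).mul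
        (hydEc.comp (show Continuous fun ζ : ℝ => (ε * ζ : ℝ) by fun_prop))
    have hu2 : Continuous fun ζ : ℝ => L i (ξ - ζ) (ε * ξ) *
        ((∑ j, (aE j (ε * ζ) - aE j (ε * ξ)) *
          ext (0 : Fin (k+2) → C(Set.Icc (0:ℝ) T, ℝ)) j ζ) + fE ζ) := by
      apply Continuous.mul ((hLcont i).comp
        (show Continuous fun ζ : ℝ => ((ξ - ζ : ℝ), (ε * ξ : ℝ)) by fun_prop))
      apply Continuous.add
      · exact continuous_finset_sum _ fun j _ =>
          (((haEc j).comp (by fun_prop)).sub continuous_const).mul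
            (hextc 0 j)
      · exact hfEc
    have hIa : |∫ ζ in (0:ℝ)..ξ, K i (ξ - ζ) (ε * ξ) * ydE (ε * ζ)|
        ≤ CΦ * Y * ((Nat.factorial 0 : ℝ) / χ ^ (0+1)
            + (Nat.factorial (k+1) : ℝ) / χ ^ (k+1+1)) := by
      apply abs_integral_le_aux hχ hCΦ.le 0 (k+1) hYnn h0 hu1
      intro ζ hζ
      have hs0 : 0 ≤ ξ - ζ := sub_nonneg.2 hζ.2
      rw [abs_mul]
      calc |K i (ξ-ζ) (ε*ξ)| * |ydE (ε*ζ)|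
          ≤ (CΦ * (1 + (ξ-ζ) ^ (k+1)) * Real.exp (-χ * (ξ-ζ))) * Y :=
            mul_le_mul (hK i _ hs0 _ (hmemX ξ h0 hξT)) (hydb _) (abs_nonneg _) (by positivity)
        _ = CΦ * (((ξ-ζ) ^ 0 + (ξ-ζ) ^ (k+1)) * Real.exp (-χ * (ξ-ζ))) * Y := by
            rw [pow_zero]; ring
    have hIb : |∫ ζ in (0:ℝ)..ξ, L i (ξ - ζ) (ε * ξ) *
          ((∑ j, (aE j (ε * ζ) - aE j (ε * ξ)) *
            ext (0 : Fin (k+2) → C(Set.Icc (0:ℝ) T, ℝ)) j ζ) + fE ζ)|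
        ≤ CΦ * (α * Ct * M) * ((Nat.factorial 0 : ℝ) / χ ^ (0+1)
            + (Nat.factorial (k+1) : ℝ) / χ ^ (k+1+1)) := by
      apply abs_integral_le_aux hχ hCΦ.le 0 (k+1) (by positivity) h0 hu2
      intro ζ hζ
      have hs0 : 0 ≤ ξ - ζ := sub_nonneg.2 hζ.2
      have hzero : (∑ j, (aE j (ε * ζ) - aE j (ε * ξ)) *
          ext (0 : Fin (k+2) → C(Set.Icc (0:ℝ) T, ℝ)) j ζ) = 0 := by
        simp [hz0]
      rw [hzero, zero_add, abs_mul]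
      calc |L i (ξ-ζ) (ε*ξ)| * |fE ζ|
          ≤ (CΦ * (1 + (ξ-ζ) ^ (k+1)) * Real.exp (-χ * (ξ-ζ))) * (α * Ct * M) :=
            mul_le_mul (hL i _ hs0 _ (hmemX ξ h0 hξT)) (hfEb ζ hζ.1) (abs_nonneg _)
              (by positivity)
        _ = CΦ * (((ξ-ζ) ^ 0 + (ξ-ζ) ^ (k+1)) * Real.exp (-χ * (ξ-ζ))) * (α * Ct * M) := by
            rw [pow_zero]; ring
    calc |Ahat (k+2) ε aE ydE K L fE
          (ext (0 : Fin (k+2) → C(Set.Icc (0:ℝ) T, ℝ))) i ξ|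
        ≤ |-(∫ ζ in (0:ℝ)..ξ, K i (ξ - ζ) (ε * ξ) * ydE (ε * ζ))|
          + |∫ ζ in (0:ℝ)..ξ, L i (ξ - ζ) (ε * ξ) *
            ((∑ j, (aE j (ε * ζ) - aE j (ε * ξ)) *
              ext (0 : Fin (k+2) → C(Set.Icc (0:ℝ) T, ℝ)) j ζ) + fE ζ)| := abs_add_le _ _
      _ = |∫ ζ in (0:ℝ)..ξ, K i (ξ - ζ) (ε * ξ) * ydE (ε * ζ)|
          + |∫ ζ in (0:ℝ)..ξ, L i (ξ - ζ) (ε * ξ) *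
            ((∑ j, (aE j (ε * ζ) - aE j (ε * ξ)) *
              ext (0 : Fin (k+2) → C(Set.Icc (0:ℝ) T, ℝ)) j ζ) + fE ζ)| := by
          rw [abs_neg]
      _ ≤ CΦ * Y * ((Nat.factorial 0 : ℝ) / χ ^ (0+1)
            + (Nat.factorial (k+1) : ℝ) / χ ^ (k+1+1))
          + CΦ * (α * Ct * M) * ((Nat.factorial 0 : ℝ) / χ ^ (0+1)
            + (Nat.factorial (k+1) : ℝ) / χ ^ (k+1+1)) := add_le_add hIa hIb
      _ = CΦ * γ := by
          rw [hγ]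
          have hfac0 : (Nat.factorial 0 : ℝ) = 1 := by norm_num
          rw [hfac0]
          field_simp
          ring
  -- contraction
  have hq0 : (0:ℝ) ≤ ε * (CΦ * β) := by positivity
  have hε₀q : ε₀ * (CΦ * β) = γ₀ := by rw [hε₀]; field_simp
  have hqle : ε * (CΦ * β) ≤ γ₀ := by nlinarith
  have hqeq : γ₀ * ε / ε₀ = ε * (CΦ * β) := by
    rw [hε₀]; field_simp
  set q : NNReal := ⟨ε * (CΦ * β), hq0⟩ with hqdef
  have hq_lt : q < 1 := by
    rw [← NNReal.coe_lt_coe, NNReal.coe_one]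
    exact lt_of_le_of_lt hqle hγ₀1
  have hlip : LipschitzWith q F := by
    apply LipschitzWith.of_dist_le_mul
    intro z w
    have h0 : (0:ℝ) ≤ (q : ℝ) * dist z w := mul_nonneg q.2 dist_nonneg
    rw [dist_pi_le_iff h0]
    intro i
    rw [ContinuousMap.dist_le h0]
    intro x
    have h := est1 z w i x.1 x.2.1 x.2.2
    calc dist (F z i x) (F w i x)
        = |Ahat (k+2) ε aE ydE K L fE (ext z) i x.1
            - Ahat (k+2) ε aE ydE K L fE (ext w) i x.1| := by
          simp only [hFdef, ContinuousMap.coe_mk, Real.dist_eq]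
      _ ≤ (q : ℝ) * dist z w := h
  have hcontr : ContractingWith q F := ⟨hq_lt, hlip⟩
  set φhat := ContractingWith.fixedPoint F hcontr with hφhatdef
  have hfix : Function.IsFixedPt F φhat := hcontr.fixedPoint_isFixedPt
  -- congruence between the original operator and the extended one
  have hAeq : ∀ (z w : Fin (k+2) → ℝ → ℝ) i (ξ : ℝ), ξ ∈ Set.Icc (0:ℝ) T →
      (∀ j, ∀ ζ ∈ Set.Icc (0:ℝ) ξ, z j ζ = w j ζ) →
      Ahat (k+2) ε a yd K L (fun ζ => ε⁻¹ * ∑ j, (a j (ε * ζ) - a j 0) * B j ζ) z i ξ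
        = Ahat (k+2) ε aE ydE K L fE w i ξ := by
    intro z w i ξ hξ hzw
    apply Ahat_congr _ _ _ _ _ _ _ _ _ _ _ _ _ hξ.1
    · intro ζ hζ; exact (hydEeq _ (hmemX ζ hζ.1 (hζ.2.trans hξ.2))).symm
    · intro j ζ hζ; exact (haEeq j _ (hmemX ζ hζ.1 (hζ.2.trans hξ.2))).symm
    · intro j; exact (haEeq j _ (hmemX ξ hξ.1 hξ.2)).symm
    · intro ζ hζ
      rw [hfEdef]
      simp only []
      congr 1
      refine Finset.sum_congr rfl fun j _ => ?_
      rw [haEeq j _ (hmemX ζ hζ.1 (hζ.2.trans hξ.2)),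
        haEeq j 0 ⟨le_rfl, hX.le⟩]
    · exact hzw
  -- nonnegativity of γ
  have hγnn : 0 ≤ γ := by
    rw [hγ]
    have h1 : 0 ≤ Ct * α * M + Y := by positivity
    have h2 : 0 ≤ (χ ^ (k+1) + (Nat.factorial (k+1) : ℝ)) / χ ^ (k+2) := by positivity
    calc (0:ℝ) ≤ (Ct * α * M + Y) * ((χ ^ (k+1) + (Nat.factorial (k+1) : ℝ)) / χ ^ (k+2)) :=
          mul_nonneg h1 h2
      _ = _ := by rw [mul_div_assoc]
  have hdist0 : dist (0 : Fin (k+2) → C(Set.Icc (0:ℝ) T, ℝ)) (F 0) ≤ CΦ * γ := by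
    rw [dist_pi_le_iff (by positivity)]
    intro i
    rw [ContinuousMap.dist_le (by positivity)]
    intro x
    have h := est0 i x.1 x.2.1 x.2.2
    calc dist ((0 : Fin (k+2) → C(Set.Icc (0:ℝ) T, ℝ)) i x) (F 0 i x)
        = |Ahat (k+2) ε aE ydE K L fE (ext 0) i x.1| := by
          simp only [hFdef, ContinuousMap.coe_mk, Real.dist_eq]
          simp [abs_sub_comm]
      _ ≤ CΦ * γ := h
  have h1q : 0 < 1 - (q:ℝ) := by
    simp only [sub_pos]
    exact lt_of_le_of_lt hqle hγ₀1
  have h1γ₀ : 0 < 1 - γ₀ := by linarith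
  have hpt : ∀ (u : Fin (k+2) → C(Set.Icc (0:ℝ) T, ℝ)) i (x : Set.Icc (0:ℝ) T),
      |φhat i x - u i x| ≤ dist u φhat := by
    intro u i x
    have h1 : dist (u i x) (φhat i x) ≤ dist (u i) (φhat i) :=
      ContinuousMap.dist_apply_le_dist _
    have h2 : dist (u i) (φhat i) ≤ dist u φhat := dist_le_pi_dist u φhat i
    calc |φhat i x - u i x| = dist (u i x) (φhat i x) := by rw [Real.dist_eq, abs_sub_comm]
      _ ≤ dist u φhat := h1.trans h2
  -- the five conclusions
  refine ⟨ext φhat, ?_, ?_, ?_, ?_, ?_⟩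
  · exact fun i => (hextc φhat i).continuousOn
  · intro i ξ hξ
    have h1 : Ahat (k+2) ε a yd K L
        (fun ζ => ε⁻¹ * ∑ j, (a j (ε * ζ) - a j 0) * B j ζ) (ext φhat) i ξ
        = Ahat (k+2) ε aE ydE K L fE (ext φhat) i ξ :=
      hAeq _ _ i ξ hξ (fun j ζ _ => rfl)
    rw [h1]
    have h2 : F φhat i ⟨ξ, hξ⟩ = φhat i ⟨ξ, hξ⟩ := by rw [hfix]
    rw [hFdef] at h2
    simpa [hext_eq φhat i ξ hξ] using h2
  · intro ψ hψc hψfix i ξ hξ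
    set ψhat : Fin (k+2) → C(Set.Icc (0:ℝ) T, ℝ) :=
      fun i => ⟨fun x => ψ i x, (hψc i).restrict⟩ with hψhatdef
    have hψext : ∀ j, ∀ ζ ∈ Set.Icc (0:ℝ) T, ψ j ζ = ext ψhat j ζ := by
      intro j ζ hζ
      rw [hext_eq ψhat j ζ hζ]
      rfl
    have hψfp : Function.IsFixedPt F ψhat := by
      funext i
      apply ContinuousMap.ext
      intro x
      have h1 : Ahat (k+2) ε a yd K L
          (fun ζ => ε⁻¹ * ∑ j, (a j (ε * ζ) - a j 0) * B j ζ) ψ i x.1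
          = Ahat (k+2) ε aE ydE K L fE (ext ψhat) i x.1 :=
        hAeq _ _ i x.1 x.2 (fun j ζ hζ => hψext j ζ ⟨hζ.1, hζ.2.trans x.2.2⟩)
      have h2 := hψfix i x.1 x.2
      rw [h1] at h2
      show Ahat (k+2) ε aE ydE K L fE (ext ψhat) i x.1 = ψhat i x
      rw [h2]
      rfl
    have := hcontr.fixedPoint_unique hψfp
    calc ψ i ξ = ψhat i ⟨ξ, hξ⟩ := rfl
      _ = φhat i ⟨ξ, hξ⟩ := by rw [this]
      _ = ext φhat i ξ := (hext_eq φhat i ξ hξ).symm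
  · intro i ξ hξ
    have h1 : dist (0 : Fin (k+2) → C(Set.Icc (0:ℝ) T, ℝ)) φhat
        ≤ dist (0 : Fin (k+2) → C(Set.Icc (0:ℝ) T, ℝ)) (F 0) / (1 - (q:ℝ)) := by
      rw [hφhatdef]
      exact hcontr.dist_fixedPoint_le 0
    have h2 : dist (0 : Fin (k+2) → C(Set.Icc (0:ℝ) T, ℝ)) φhat ≤ CΦ * γ / (1 - (q:ℝ)) :=
      h1.trans (by gcongr)
    have h3 : CΦ * γ / (1 - (q:ℝ)) ≤ CΦ * γ / (1 - γ₀) := by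
      apply div_le_div_of_nonneg_left (by positivity) h1γ₀
      have : (q:ℝ) = ε * (CΦ * β) := rfl
      linarith [hqle]
    have h4 : |ext φhat i ξ| ≤ dist (0 : Fin (k+2) → C(Set.Icc (0:ℝ) T, ℝ)) φhat := by
      rw [hext_eq φhat i ξ hξ]
      simpa using hpt 0 i ⟨ξ, hξ⟩
    rw [hC₀]
    exact h4.trans (h2.trans h3)
  · intro Z hZ0 hZsucc
    have hZeq : ∀ n i, ∀ ξ : ℝ, ∀ hξ : ξ ∈ Set.Icc (0:ℝ) T, Z n i ξ = (F^[n] 0) i ⟨ξ, hξ⟩ := by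
      intro n
      induction n with
      | zero => intro i ξ hξ; rw [hZ0]; simp
      | succ n ih =>
        intro i ξ hξ
        rw [hZsucc n]
        have h1 : Ahat (k+2) ε a yd K L
            (fun ζ => ε⁻¹ * ∑ j, (a j (ε * ζ) - a j 0) * B j ζ) (Z n) i ξ
            = Ahat (k+2) ε aE ydE K L fE (ext (F^[n] 0)) i ξ :=
          hAeq _ _ i ξ hξ (fun j ζ hζ => by
            rw [ih j ζ ⟨hζ.1, hζ.2.trans hξ.2⟩,
              hext_eq (F^[n] 0) j ζ ⟨hζ.1, hζ.2.trans hξ.2⟩])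
        rw [h1, Function.iterate_succ_apply']
        rfl
    intro n i ξ hξ
    have h1 : dist (F^[n] 0) φhat
        ≤ dist (0 : Fin (k+2) → C(Set.Icc (0:ℝ) T, ℝ)) (F 0) * (q:ℝ)^n / (1 - (q:ℝ)) := by
      rw [hφhatdef]
      exact hcontr.apriori_dist_iterate_fixedPoint_le 0 n
    have h2 : |ext φhat i ξ - Z n i ξ| ≤ dist (F^[n] 0) φhat := by
      rw [hext_eq φhat i ξ hξ, hZeq n i ξ hξ]
      exact hpt (F^[n] 0) i ⟨ξ, hξ⟩
    have hqc : (q:ℝ) = ε * (CΦ * β) := rfl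
    have h3 : dist (0 : Fin (k+2) → C(Set.Icc (0:ℝ) T, ℝ)) (F 0) * (q:ℝ)^n / (1 - (q:ℝ))
        ≤ CΦ * γ * (q:ℝ)^n / (1 - γ₀) := by
      apply div_le_div₀ (by positivity)
        (mul_le_mul_of_nonneg_right hdist0 (by positivity)) h1γ₀ (by rw [hqc] at h1q ⊢; linarith)
    have h4 : CΦ * γ * (q:ℝ)^n / (1 - γ₀) = C₀ * (γ₀ * ε / ε₀)^n := by
      rw [hC₀, hqeq, hqc]
      ring
    calc |ext φhat i ξ - Z n i ξ| ≤ dist (F^[n] 0) φhat := h2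
      _ ≤ dist (0 : Fin (k+2) → C(Set.Icc (0:ℝ) T, ℝ)) (F 0) * (q:ℝ)^n / (1 - (q:ℝ)) := h1
      _ ≤ CΦ * γ * (q:ℝ)^n / (1 - γ₀) := h3
      _ = C₀ * (γ₀ * ε / ε₀)^n := h4
end
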